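/- arXiv:1701.06208 — 2 statements merged into one kernel-verified Lean document; each statement's English description precedes it below -/
import Mathlib

section
/- Let H be a connected graph with n vertices and m edges. Then the number of spanning trees of H is at most (1/n)·(2m/(n-1))^{n-1}. -/
/-- A spanning tree of a graph `G` on a finite vertex type `V`, encoded by its edge set. -/
def spanningTrees {V : Type*} [Fintype V] (G : SimpleGraph V) : Set (Finset (Sym2 V)) :=
  {s | (s : Set (Sym2 V)) ⊆ G.edgeSet ∧ (SimpleGraph.fromEdgeSet (s : Set (Sym2 V))).IsTree}

/-!
Let `N` be an oriented incidence matrix of `H`, so that `L = N Nᵀ` is positive semidefinite,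
singular, with trace `2m`. For `t > 0` write `L + t I = A D Aᵀ` with `A = [N | I]` and
`D = diag(1, …, 1, t, …, t)`. By Cauchy–Binet, `det (L + t I)` is a sum of nonnegative terms, one
per set of `n` columns of `A`. The edges of a spanning tree together with one root vertex give a
nonzero integer minor of weight `t`, so `τ n t ≤ det (L + t I)`, where `τ` is the number of
spanning trees. On the other side, the eigenvalues of `L` are `0 = μ₁, μ₂, …, μₙ ≥ 0` with sum
`2m`, so by AM–GM `det (L + t I) = t ∏_{i ≥ 2} (μᵢ + t) ≤ t (2m / (n - 1) + t) ^ (n - 1)`.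
Divide by `t` and let `t → 0`.
-/

open Finset Matrix
open scoped Nat

section CauchyBinet

variable {ι C R : Type*} [Fintype ι] [DecidableEq ι] [Fintype C] [CommRing R]

theorem Matrix.det_mul_eq_sum_prod_mul_det_submatrix (A : Matrix ι C R) (B : Matrix C ι R) :
    det (A * B) = ∑ p : ι → C, (∏ i, B (p i) i) * det (A.submatrix id p) := by
  simp only [det_apply', mul_apply, prod_univ_sum, mul_sum, Fintype.piFinset_univ,
    submatrix_apply, id, prod_mul_distrib]
  rw [sum_comm]
  exact sum_congr rfl fun p _ => sum_congr rfl fun σ _ => by ring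

/-- Cauchy–Binet, summed over all orderings of each set of columns, which spares choosing one. -/
theorem Matrix.factorial_card_mul_det_mul (A : Matrix ι C R) (B : Matrix C ι R) :
    ((Fintype.card ι)! : R) * det (A * B)
      = ∑ p : ι → C, det (A.submatrix id p) * det (B.submatrix p id) := by
  have reindex (π : Equiv.Perm ι) : det (A * B)
      = ∑ p : ι → C, det (A.submatrix id p) * (Equiv.Perm.sign π * ∏ i, B (p (π i)) i) := by
    rw [det_mul_eq_sum_prod_mul_det_submatrix, ← (π.arrowCongr (Equiv.refl C)).symm.sum_comp]
    refine sum_congr rfl fun p _ => ?_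
    change (∏ i, B (p (π i)) i) * det ((A.submatrix id p).submatrix id π) = _
    rw [det_permute']
    ring
  calc ((Fintype.card ι)! : R) * det (A * B) = ∑ π : Equiv.Perm ι, det (A * B) := by
        rw [sum_const, Finset.card_univ, Fintype.card_perm, nsmul_eq_mul]
    _ = ∑ p : ι → C, det (A.submatrix id p) *
          ∑ π : Equiv.Perm ι, Equiv.Perm.sign π * ∏ i, B (p (π i)) i := by
        simp_rw [mul_sum]
        rw [sum_comm]
        exact sum_congr rfl fun π _ => reindex π
    _ = _ := by simp only [det_apply', submatrix_apply, id]

theorem Matrix.factorial_card_mul_det_mul_diagonal_mul_transpose [DecidableEq C]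
    (A : Matrix ι C R) (w : C → R) :
    ((Fintype.card ι)! : R) * det (A * diagonal w * Aᵀ)
      = ∑ p : ι → C, (∏ i, w (p i)) * det (A.submatrix id p) ^ 2 := by
  rw [Matrix.mul_assoc, factorial_card_mul_det_mul]
  refine sum_congr rfl fun p _ => ?_
  have hsub : (diagonal w * Aᵀ).submatrix p id = diagonal (w ∘ p) * (A.submatrix id p)ᵀ := by
    ext i j
    simp
  rw [hsub, det_mul, det_diagonal, det_transpose]
  simp only [Function.comp_apply]
  ring

end CauchyBinet

section CountingColumnSelections

variable {ι C : Type*} [Fintype ι] [DecidableEq ι] [Fintype C] [DecidableEq C]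

theorem card_filter_image_univ_eq_factorial {S : Finset C} (hS : #S = Fintype.card ι) :
    #{p : ι → C | univ.image p = S} = (Fintype.card ι)! := by
  rw [← Fintype.card_equiv (Fintype.equivOfCardEq (by simp [hS]) : ι ≃ S), ← Finset.card_univ]
  symm
  refine card_bij (fun e _ => Subtype.val ∘ e) (fun e _ => ?_) (fun e₁ _ e₂ _ h => ?_) ?_
  · rw [mem_filter]
    refine ⟨mem_univ _, ?_⟩
    ext c
    simp only [mem_image, mem_univ, true_and, Function.comp_apply]
    exact ⟨fun ⟨i, hi⟩ => hi ▸ (e i).2, fun hc => ⟨e.symm ⟨c, hc⟩, by simp⟩⟩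
  · exact Equiv.ext fun i => Subtype.ext (congrFun h i)
  · intro p hp
    rw [mem_filter] at hp
    have hinj : Function.Injective p := by
      rw [← Set.injOn_univ, ← coe_univ, ← card_image_iff, hp.2, hS, Finset.card_univ]
    have hmem (i : ι) : p i ∈ S := hp.2 ▸ mem_image_of_mem p (mem_univ i)
    refine ⟨Equiv.ofBijective (fun i => ⟨p i, hmem i⟩) ?_, mem_univ _, rfl⟩
    rw [Fintype.bijective_iff_injective_and_card]
    exact ⟨fun i j h => hinj (congrArg Subtype.val h), by simp [hS]⟩

theorem card_filter_image_univ_mem {𝒮 : Finset (Finset C)}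
    (h𝒮 : ∀ S ∈ 𝒮, #S = Fintype.card ι) :
    #{p : ι → C | univ.image p ∈ 𝒮} = (Fintype.card ι)! * #𝒮 := by
  rw [card_eq_sum_card_fiberwise (s := {p : ι → C | univ.image p ∈ 𝒮})
    (f := fun p => univ.image p) (t := 𝒮) (fun p hp => by simpa using hp)]
  calc ∑ S ∈ 𝒮, #{p ∈ {p : ι → C | univ.image p ∈ 𝒮} | univ.image p = S}
      = ∑ S ∈ 𝒮, (Fintype.card ι)! := sum_congr rfl fun S hS => by
        rw [filter_filter, ← card_filter_image_univ_eq_factorial (h𝒮 S hS)]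
        exact congrArg card (filter_congr fun p _ => ⟨fun h => h.2, fun h => ⟨h ▸ hS, h⟩⟩)
    _ = (Fintype.card ι)! * #𝒮 := by rw [sum_const, smul_eq_mul, mul_comm]

end CountingColumnSelections

theorem Real.prod_le_mean_pow {ι : Type*} (s : Finset ι) {f : ι → ℝ}
    (hf : ∀ i ∈ s, 0 ≤ f i) : ∏ i ∈ s, f i ≤ ((∑ i ∈ s, f i) / #s) ^ #s := by
  rcases s.eq_empty_or_nonempty with rfl | hs
  · simp
  have hmean := Real.geom_mean_le_arith_mean s (fun _ => 1) f (fun _ _ => zero_le_one)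
    (by simpa using hs) hf
  simp only [Real.rpow_one, sum_const, nsmul_eq_mul, mul_one, one_mul] at hmean
  calc ∏ i ∈ s, f i = ((∏ i ∈ s, f i) ^ ((#s : ℝ)⁻¹)) ^ #s :=
        (Real.rpow_inv_natCast_pow (prod_nonneg hf) hs.card_pos.ne').symm
    _ ≤ ((∑ i ∈ s, f i) / #s) ^ #s := by
        gcongr
        exact Real.rpow_nonneg (prod_nonneg hf) _

theorem Real.prod_add_le_mean_add_pow {ι : Type*} (s : Finset ι) {f : ι → ℝ}
    (hf : ∀ i ∈ s, 0 ≤ f i) {t : ℝ} (ht : 0 ≤ t) :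
    ∏ i ∈ s, (f i + t) ≤ ((∑ i ∈ s, f i) / #s + t) ^ #s := by
  rcases s.eq_empty_or_nonempty with rfl | hs
  · simp
  calc ∏ i ∈ s, (f i + t) ≤ ((∑ i ∈ s, (f i + t)) / #s) ^ #s :=
        Real.prod_le_mean_pow s fun i hi => add_nonneg (hf i hi) ht
    _ = ((∑ i ∈ s, f i) / #s + t) ^ #s := by
        rw [sum_add_distrib, sum_const, nsmul_eq_mul, add_div,
          mul_div_cancel_left₀ _ (Nat.cast_ne_zero.mpr hs.card_pos.ne')]

theorem Matrix.IsHermitian.det_add_smul_one {n 𝕜 : Type*} [Fintype n] [DecidableEq n]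
    [RCLike 𝕜] {A : Matrix n n 𝕜} (hA : A.IsHermitian) (t : ℝ) :
    det (A + (t : 𝕜) • 1) = ∏ i, ((hA.eigenvalues i + t : ℝ) : 𝕜) := by
  have hconj : A + (t : 𝕜) • 1 = Unitary.conjStarAlgAut 𝕜 _ hA.eigenvectorUnitary
      (diagonal fun i => ((hA.eigenvalues i + t : ℝ) : 𝕜)) := by
    conv_lhs => rw [hA.spectral_theorem]
    rw [← map_one (Unitary.conjStarAlgAut 𝕜 _ hA.eigenvectorUnitary), ← map_smul, ← map_add]
    congr 1
    ext i j
    by_cases hij : i = j <;> simp [hij, Algebra.algebraMap_eq_smul_one, add_smul]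
  rw [hconj]
  simp [-Unitary.conjStarAlgAut_apply]

theorem Matrix.PosSemidef.det_add_smul_one_le {n : Type*} [Fintype n] [DecidableEq n]
    {A : Matrix n n ℝ} (hA : A.PosSemidef) (hdet : A.det = 0) {t : ℝ} (ht : 0 ≤ t) :
    det (A + t • 1) ≤ t * (A.trace / (Fintype.card n - 1 : ℝ) + t) ^ (Fintype.card n - 1) := by
  have hdet_shift := hA.isHermitian.det_add_smul_one t
  simp only [RCLike.ofReal_real_eq_id, id] at hdet_shift
  set μ := hA.isHermitian.eigenvalues
  obtain ⟨j, -, hj⟩ : ∃ j ∈ univ, μ j = 0 := by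
    rw [← prod_eq_zero_iff]
    simpa [hA.isHermitian.det_eq_prod_eigenvalues] using hdet
  have hcard : #(univ.erase j) = Fintype.card n - 1 := card_erase_of_mem (mem_univ j)
  have htrace : ∑ i ∈ univ.erase j, μ i = A.trace := by
    rw [sum_erase _ hj, hA.isHermitian.trace_eq_sum_eigenvalues]
    simp [μ]
  rw [hdet_shift, ← mul_prod_erase univ _ (mem_univ j), hj, zero_add]
  gcongr
  calc ∏ i ∈ univ.erase j, (μ i + t)
      ≤ ((∑ i ∈ univ.erase j, μ i) / #(univ.erase j) + t) ^ #(univ.erase j) :=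
        Real.prod_add_le_mean_add_pow _ (fun i _ => hA.eigenvalues_nonneg i) ht
    _ = (A.trace / (Fintype.card n - 1 : ℝ) + t) ^ (Fintype.card n - 1) := by
        rw [htrace, hcard, Nat.cast_pred (Fintype.card_pos_iff.mpr ⟨j⟩)]

theorem Int.one_le_sq_cast_of_ne_zero {z : ℤ} (hz : z ≠ 0) : (1 : ℝ) ≤ (z : ℝ) ^ 2 := by
  rw [one_le_sq_iff_one_le_abs]
  exact_mod_cast Int.one_le_abs hz

namespace SimpleGraph

variable {V : Type*}

theorem Preconnected.apply_eq_of_forall_adj {α : Type*} {G : SimpleGraph V}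
    (hG : G.Preconnected) {f : V → α} (h : ∀ a b, G.Adj a b → f a = f b) (u v : V) :
    f u = f v := by
  obtain ⟨w⟩ := hG u v
  induction w with
  | nil => rfl
  | cons hadj _ ih => exact (h _ _ hadj).trans ih

theorem card_add_one_of_mem_spanningTrees [Fintype V] {G : SimpleGraph V}
    {T : Finset (Sym2 V)} (hT : T ∈ spanningTrees G) : #T + 1 = Fintype.card V := by
  classical
  obtain ⟨hTG, htree⟩ := hT
  have hedges : (fromEdgeSet (T : Set (Sym2 V))).edgeFinset = T := by
    ext e
    simp only [mem_edgeFinset, edgeSet_fromEdgeSet, Set.mem_sdiff, mem_coe, Sym2.mem_diagSet]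
    exact ⟨fun h => h.1, fun h => ⟨h, G.not_isDiag_of_mem_edgeSet (hTG h)⟩⟩
  simpa [hedges] using htree.card_edgeFinset

variable [DecidableEq V] (G : SimpleGraph V)

open Classical in
/-- `e.out` serves as an arbitrary orientation of the edge `e`. -/
noncomputable def orientedIncMatrix (R : Type*) [Ring R] : Matrix V (Sym2 V) R :=
  of fun v e => if e ∈ G.edgeSet then (Pi.single e.out.1 1 - Pi.single e.out.2 1 : V → R) v else 0

variable {G} {R : Type*} [CommRing R]

theorem orientedIncMatrix_map_intCast :
    (G.orientedIncMatrix ℤ).map (Int.cast : ℤ → R) = G.orientedIncMatrix R := by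
  ext v e
  simp [orientedIncMatrix, Pi.single_apply]

variable [Fintype V]

theorem vecMul_orientedIncMatrix_of_mem {e : Sym2 V} (he : e ∈ G.edgeSet) (x : V → R) :
    (x ᵥ* G.orientedIncMatrix R) e = x e.out.1 - x e.out.2 := by
  change x ⬝ᵥ (fun v => G.orientedIncMatrix R v e) = _
  simp only [orientedIncMatrix, of_apply, if_pos he]
  rw [dotProduct_sub, dotProduct_single, dotProduct_single, mul_one, mul_one]

theorem vecMul_orientedIncMatrix_of_notMem {e : Sym2 V} (he : e ∉ G.edgeSet) (x : V → R) :
    (x ᵥ* G.orientedIncMatrix R) e = 0 := by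
  simp [vecMul, orientedIncMatrix, he, dotProduct]

theorem vecMul_orientedIncMatrix_eq_zero_iff {a b : V} (h : s(a, b) ∈ G.edgeSet) (x : V → R) :
    (x ᵥ* G.orientedIncMatrix R) s(a, b) = 0 ↔ x a = x b := by
  rw [vecMul_orientedIncMatrix_of_mem h, sub_eq_zero]
  generalize hq : s(a, b).out = q
  have hq' : s(q.1, q.2) = s(a, b) := hq ▸ Quot.out_eq _
  rcases Sym2.eq_iff.mp hq' with ⟨rfl, rfl⟩ | ⟨rfl, rfl⟩
  · rfl
  · exact eq_comm

theorem const_one_vecMul_orientedIncMatrix :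
    (fun _ => 1 : V → R) ᵥ* G.orientedIncMatrix R = 0 := by
  funext e
  by_cases he : e ∈ G.edgeSet
  · rw [vecMul_orientedIncMatrix_of_mem he, sub_self, Pi.zero_apply]
  · exact vecMul_orientedIncMatrix_of_notMem he _

theorem det_orientedIncMatrix_mul_transpose [Nonempty V] [IsDomain R] :
    det (G.orientedIncMatrix R * (G.orientedIncMatrix R)ᵀ) = 0 := by
  rw [← exists_vecMul_eq_zero_iff]
  refine ⟨fun _ => 1, Function.ne_iff.mpr ⟨Classical.arbitrary V, one_ne_zero⟩, ?_⟩
  rw [← vecMul_vecMul, const_one_vecMul_orientedIncMatrix, zero_vecMul]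

theorem trace_orientedIncMatrix_mul_transpose [DecidableRel G.Adj] :
    trace (G.orientedIncMatrix R * (G.orientedIncMatrix R)ᵀ) = 2 * #G.edgeFinset := by
  have hdiag (e : Sym2 V) : ((G.orientedIncMatrix R)ᵀ * G.orientedIncMatrix R) e e
      = if e ∈ G.edgeFinset then 2 else 0 := by
    change ((fun v => G.orientedIncMatrix R v e) ᵥ* G.orientedIncMatrix R) e = _
    split_ifs with he
    · rw [mem_edgeFinset] at he
      have hne : e.out.1 ≠ e.out.2 := fun h =>
        G.not_isDiag_of_mem_edgeSet he (e.out_eq ▸ Sym2.mk_isDiag_iff.mpr h)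
      rw [vecMul_orientedIncMatrix_of_mem he]
      norm_num [orientedIncMatrix, he, hne, hne.symm]
    · exact vecMul_orientedIncMatrix_of_notMem (mt mem_edgeFinset.mpr he) _
  rw [trace_mul_comm, trace]
  simp only [Matrix.diag, hdiag, sum_ite_mem, univ_inter, sum_const, nsmul_eq_mul]
  ring

theorem det_fromCols_orientedIncMatrix_one_submatrix_ne_zero [IsDomain R]
    {T : Set (Sym2 V)} (hTG : T ⊆ G.edgeSet) (hT : (fromEdgeSet T).Preconnected) {r : V}
    {p : V → Sym2 V ⊕ V} (hpT : ∀ e ∈ T, ∃ i, p i = Sum.inl e) (hpr : ∃ i, p i = Sum.inr r) :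
    det ((fromCols (G.orientedIncMatrix R) 1).submatrix id p) ≠ 0 := by
  intro h
  obtain ⟨x, hx0, hx⟩ := exists_vecMul_eq_zero_iff.mpr h
  have hcol (i : V) : (x ᵥ* fromCols (G.orientedIncMatrix R) 1) (p i) = 0 := congrFun hx i
  have hr : x r = 0 := by
    obtain ⟨i, hi⟩ := hpr
    simpa [hi, vecMul_fromCols] using hcol i
  have hadj (a b : V) (hab : (fromEdgeSet T).Adj a b) : x a = x b := by
    rw [fromEdgeSet_adj] at hab
    obtain ⟨i, hi⟩ := hpT _ hab.1
    rw [← vecMul_orientedIncMatrix_eq_zero_iff (hTG hab.1)]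
    simpa [hi, vecMul_fromCols] using hcol i
  exact hx0 (funext fun v => (hT.apply_eq_of_forall_adj hadj v r).trans hr)

variable (G) in
open Classical in
noncomputable def rootedSpanningTreeColumns : Finset (Finset (Sym2 V ⊕ V)) :=
  (({T | T ∈ spanningTrees G} : Finset (Finset (Sym2 V))) ×ˢ univ).image
    fun Tr => Tr.1.disjSum {Tr.2}

theorem mem_rootedSpanningTreeColumns {S : Finset (Sym2 V ⊕ V)} :
    S ∈ G.rootedSpanningTreeColumns ↔ ∃ T ∈ spanningTrees G, ∃ r, T.disjSum {r} = S := by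
  simp [rootedSpanningTreeColumns]

theorem card_of_mem_rootedSpanningTreeColumns {S : Finset (Sym2 V ⊕ V)}
    (hS : S ∈ G.rootedSpanningTreeColumns) : #S = Fintype.card V := by
  obtain ⟨T, hT, r, rfl⟩ := mem_rootedSpanningTreeColumns.mp hS
  rw [card_disjSum, card_singleton, card_add_one_of_mem_spanningTrees hT]

variable (G) in
theorem card_rootedSpanningTreeColumns :
    #G.rootedSpanningTreeColumns = (spanningTrees G).ncard * Fintype.card V := by
  classical
  rw [rootedSpanningTreeColumns, card_image_of_injective _ (fun _ _ h => Prod.ext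
    (disjSum_inj.mp h).1 (singleton_inj.mp (disjSum_inj.mp h).2)), card_product,
    Finset.card_univ, ← Set.ncard_coe_finset]
  congr
  ext T
  simp

theorem le_prod_mul_det_sq_of_image_mem_rootedSpanningTreeColumns {p : V → Sym2 V ⊕ V}
    (hp : univ.image p ∈ G.rootedSpanningTreeColumns) {t : ℝ} (ht : 0 ≤ t) :
    t ≤ (∏ i, Sum.elim (fun _ => 1) (fun _ => t) (p i)) *
      det ((fromCols (G.orientedIncMatrix ℝ) 1).submatrix id p) ^ 2 := by
  obtain ⟨T, hT, r, hTr⟩ := mem_rootedSpanningTreeColumns.mp hp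
  have hrange (c : Sym2 V ⊕ V) (hc : c ∈ T.disjSum {r}) : ∃ i, p i = c := by
    simpa [hTr] using hc
  have hinj : Function.Injective p := by
    rw [← Set.injOn_univ, ← coe_univ, ← card_image_iff,
      card_of_mem_rootedSpanningTreeColumns hp, Finset.card_univ]
  have hweight : ∏ i, Sum.elim (fun _ => 1) (fun _ => t) (p i) = t := by
    rw [← prod_image hinj.injOn, ← hTr, prod_disjSum]
    simp
  have hdet_int : det ((fromCols (G.orientedIncMatrix ℤ) 1).submatrix id p) ≠ 0 :=
    det_fromCols_orientedIncMatrix_one_submatrix_ne_zero hT.1 hT.2.connected.preconnected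
      (fun e he => hrange _ (inl_mem_disjSum.mpr he))
      (hrange _ (inr_mem_disjSum.mpr (mem_singleton_self r)))
  have hcast : det ((fromCols (G.orientedIncMatrix ℝ) 1).submatrix id p)
      = det ((fromCols (G.orientedIncMatrix ℤ) 1).submatrix id p) := by
    rw [Int.cast_det, ← submatrix_map, fromCols_map, orientedIncMatrix_map_intCast,
      Matrix.map_one _ Int.cast_zero Int.cast_one]
  rw [hweight, hcast]
  exact le_mul_of_one_le_right ht (Int.one_le_sq_cast_of_ne_zero hdet_int)

variable (G)

theorem ncard_spanningTrees_mul_card_mul_le_det {t : ℝ} (ht : 0 ≤ t) :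
    ((spanningTrees G).ncard * Fintype.card V : ℝ) * t
      ≤ det (G.orientedIncMatrix ℝ * (G.orientedIncMatrix ℝ)ᵀ + t • 1) := by
  classical
  set A := fromCols (G.orientedIncMatrix ℝ) (1 : Matrix V V ℝ)
  set w : Sym2 V ⊕ V → ℝ := Sum.elim (fun _ => 1) (fun _ => t)
  have hfactor : G.orientedIncMatrix ℝ * (G.orientedIncMatrix ℝ)ᵀ + t • 1
      = A * diagonal w * Aᵀ := by
    have hscale : A * diagonal w = fromCols (G.orientedIncMatrix ℝ) (t • 1) := by
      ext i (j | j) <;> simp [A, w, one_apply]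
    rw [hscale, transpose_fromCols, fromCols_mul_fromRows, transpose_one, Matrix.mul_one]
  set 𝒮 := G.rootedSpanningTreeColumns
  have hsum : ((Fintype.card V)! : ℝ) * (#𝒮 * t)
      ≤ (Fintype.card V)! * det (A * diagonal w * Aᵀ) := by
    rw [factorial_card_mul_det_mul_diagonal_mul_transpose]
    calc ((Fintype.card V)! : ℝ) * (#𝒮 * t)
        = ∑ p : V → Sym2 V ⊕ V with univ.image p ∈ 𝒮, t := by
          rw [sum_const, card_filter_image_univ_mem fun S => card_of_mem_rootedSpanningTreeColumns,
            nsmul_eq_mul]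
          push_cast
          ring
      _ ≤ ∑ p : V → Sym2 V ⊕ V with univ.image p ∈ 𝒮,
            (∏ i, w (p i)) * det (A.submatrix id p) ^ 2 :=
          sum_le_sum fun p hp =>
            le_prod_mul_det_sq_of_image_mem_rootedSpanningTreeColumns (mem_filter.mp hp).2 ht
      _ ≤ ∑ p, (∏ i, w (p i)) * det (A.submatrix id p) ^ 2 :=
          sum_le_sum_of_subset_of_nonneg (filter_subset _ _) fun p _ _ =>
            mul_nonneg (prod_nonneg fun i _ => by cases p i <;> simp [w, ht]) (sq_nonneg _)
  rw [hfactor]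
  exact_mod_cast card_rootedSpanningTreeColumns G ▸ le_of_mul_le_mul_left hsum (by positivity)

end SimpleGraph

open SimpleGraph in
/-- Grimmett's bound. A connected graph `H` with `n` vertices and `m` edges
has at most `(1/n)·(2m/(n-1))^(n-1)` spanning trees. -/
theorem card_spanningTrees_le {V : Type*} [Fintype V] (H : SimpleGraph V)
    [DecidableRel H.Adj] (hH : H.Connected) (n m : ℕ) (hn : n = Fintype.card V)
    (hm : m = H.edgeFinset.card) :
    ((spanningTrees H).ncard : ℝ) ≤ (1 / (n : ℝ)) * (2 * (m : ℝ) / ((n : ℝ) - 1)) ^ (n - 1) := by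
  classical
  subst hn hm
  have := hH.nonempty
  set N := H.orientedIncMatrix ℝ
  have hL : (N * Nᵀ).PosSemidef := by
    simpa [conjTranspose_eq_transpose_of_trivial] using posSemidef_self_mul_conjTranspose N
  set a := 2 * (#H.edgeFinset : ℝ) / (Fintype.card V - 1)
  have hbound (t : ℝ) (ht : 0 < t) :
      (spanningTrees H).ncard * Fintype.card V ≤ (a + t) ^ (Fintype.card V - 1) := by
    have h := (ncard_spanningTrees_mul_card_mul_le_det H ht.le).trans
      (hL.det_add_smul_one_le det_orientedIncMatrix_mul_transpose ht.le)
    rw [trace_orientedIncMatrix_mul_transpose, mul_comm _ t] at h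
    exact le_of_mul_le_mul_left h ht
  have hlim : ((spanningTrees H).ncard * Fintype.card V : ℝ) ≤ a ^ (Fintype.card V - 1) := by
    have hcont : ContinuousWithinAt (fun t => (a + t) ^ (Fintype.card V - 1)) (Set.Ioi 0) 0 :=
      (by fun_prop : Continuous fun t : ℝ => (a + t) ^ (Fintype.card V - 1)).continuousWithinAt
    simpa using ge_of_tendsto hcont (eventually_nhdsWithin_of_forall hbound)
  rw [one_div_mul_eq_div, le_div_iff₀ (by exact_mod_cast Fintype.card_pos)]
  exact hlim
end

section
/- Let G be a connected graph on n vertices containing an edge ab such that a and b have at least d common neighbors. If T is a uniformly random spanning tree of G, then P[ab ∈ T] ≤ 2/(d+2). -/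
open SimpleGraph

/-!
Deleting `ab` from a spanning tree `T` through `ab` splits it into a component of `a` and a
component of `b`. For a common neighbour `c` of `a` and `b`, adding `cb` if `c` lies on the side
of `a`, and `ca` otherwise, gives a spanning tree avoiding `ab`. The new tree and the side
determine `c`, the only neighbour of `b` (resp. `a`) that `a` (resp. `b`) reaches by a path
avoiding `b` (resp. `a`), and then `T`. Hence (trees through `ab`) · d ≤ 2 · (trees avoiding `ab`),
which rearranges to the bound.
-/

namespace SimpleGraph

variable {V : Type*} {G H H₁ H₂ K T : SimpleGraph V} {a b c c₁ c₂ v : V}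

lemma edgeSet_fromEdgeSet_of_subset {s : Set (Sym2 V)} (hs : s ⊆ G.edgeSet) :
    (fromEdgeSet s).edgeSet = s :=
  (edgeSet_eq_iff _ _).2
    ⟨rfl, Set.subset_compl_iff_disjoint_right.1 (hs.trans G.edgeSet_subset_compl_diagSet)⟩

lemma Reachable.deleteEdges_or {w : V} (h : G.Reachable v w) :
    (G.deleteEdges {s(a, b)}).Reachable v w ∨ (G.deleteEdges {s(a, b)}).Reachable v a ∨
      (G.deleteEdges {s(a, b)}).Reachable v b := by
  obtain ⟨p⟩ := h
  induction p with
  | nil => exact .inl .rfl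
  | @cons v u _ hvu _ ih =>
    by_cases he : s(v, u) = s(a, b)
    · rcases Sym2.eq_iff.1 he with ⟨rfl, -⟩ | ⟨rfl, -⟩
      exacts [.inr (.inl .rfl), .inr (.inr .rfl)]
    · have hvu' : (G.deleteEdges {s(a, b)}).Adj v u := by simp [hvu, he]
      exact ih.imp hvu'.reachable.trans (.imp hvu'.reachable.trans hvu'.reachable.trans)

lemma IsTree.not_reachable_deleteEdges (hT : T.IsTree) (hab : T.Adj a b) :
    ¬(T.deleteEdges {s(a, b)}).Reachable a b :=
  isBridge_iff.1 (isAcyclic_iff_forall_isBridge.1 hT.isAcyclic hab)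

lemma Reachable.of_le_sup_edge (hle : H ≤ K ⊔ edge c b) (hb : ¬H.Reachable a b)
    (h : H.Reachable a v) : K.Reachable a v := by
  obtain ⟨p⟩ := h
  induction p with
  | nil => exact .rfl
  | @cons u w _ huw _ ih =>
    have hwb : ¬H.Reachable w b := fun h => hb (huw.reachable.trans h)
    have huw' : K.Adj u w := by
      have := hle huw
      simp only [sup_adj, edge_adj] at this
      rcases this with h | ⟨h, -⟩
      · exact h
      · rcases h with ⟨-, rfl⟩ | ⟨rfl, -⟩
        exacts [absurd .rfl hwb, absurd .rfl hb]
    exact huw'.reachable.trans (ih hwb)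

lemma Connected.reachable_deleteEdges_or (hG : G.Connected) (a b c : V) :
    (G.deleteEdges {s(a, b)}).Reachable a c ∨ (G.deleteEdges {s(b, a)}).Reachable b c := by
  rw [Sym2.eq_swap (a := b)]
  rcases (hG.preconnected c a).deleteEdges_or (a := a) (b := b) with h | h | h <;>
    simp [h.symm]

lemma deleteEdges_sup_edge_of_adj (h : G.Adj a b) : G.deleteEdges {s(a, b)} ⊔ edge a b = G := by
  ext u v
  simp only [sup_adj, deleteEdges_adj, edge_adj, Set.mem_singleton_iff, Sym2.eq_iff]
  grind [G.adj_symm, G.ne_of_adj]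

lemma sup_edge_deleteEdges_of_not_adj (h : ¬H.Adj c b) :
    (H ⊔ edge c b).deleteEdges {s(c, b)} = H := by
  rw [deleteEdges_sup, deleteEdges_edge (Set.mem_singleton _), sup_bot_eq, deleteEdges_eq_self]
  simpa using h

def replaceEdge (T : SimpleGraph V) (a b c : V) : SimpleGraph V :=
  T.deleteEdges {s(a, b)} ⊔ edge c b

lemma IsTree.replaceEdge (hT : T.IsTree) (hab : T.Adj a b)
    (hc : (T.deleteEdges {s(a, b)}).Reachable a c) : (T.replaceEdge a b c).IsTree := by
  set H := T.deleteEdges {s(a, b)}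
  have hcb : ¬H.Reachable c b := fun h => hT.not_reachable_deleteEdges hab (hc.trans h)
  have hcb_adj : (H ⊔ edge c b).Adj c b := by
    simpa [edge_adj] using Or.inr fun h : c = b => hcb (h ▸ .rfl)
  refine ⟨(connected_iff_exists_forall_reachable _).2 ⟨b, fun w => ?_⟩,
    (hT.isAcyclic.anti (deleteEdges_le _)).sup_edge_of_not_reachable hcb⟩
  rcases hT.connected.reachable_deleteEdges_or a b w with h | h
  · exact hcb_adj.reachable.symm.trans ((hc.symm.trans h).mono le_sup_left)
  · rw [Sym2.eq_swap] at h
    exact h.mono le_sup_left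

lemma eq_of_sup_edge_eq (h₁ : ¬H₁.Reachable a b) (h₂ : ¬H₂.Reachable a b)
    (hc₁ : H₁.Reachable a c₁) (hc₂ : H₂.Reachable a c₂) (h : H₁ ⊔ edge c₁ b = H₂ ⊔ edge c₂ b) :
    c₁ = c₂ ∧ H₁ = H₂ := by
  have hnadj₁ : ¬H₁.Adj c₁ b := fun hadj => h₁ (hc₁.trans hadj.reachable)
  have hnadj₂ : ¬H₂.Adj c₂ b := fun hadj => h₂ (hc₂.trans hadj.reachable)
  have hc : c₁ = c₂ := by
    by_contra hne
    have hadj : (H₂ ⊔ edge c₂ b).Adj c₁ b := by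
      rw [← h]
      simpa [edge_adj] using Or.inr fun h : c₁ = b => h₁ (h ▸ hc₁)
    have hadj₂ : H₂.Adj c₁ b := by
      simp only [sup_adj, edge_adj] at hadj
      grind
    exact h₂ ((hc₁.of_le_sup_edge (h ▸ le_sup_left) h₁).trans hadj₂.reachable)
  subst hc
  refine ⟨rfl, ?_⟩
  rw [← sup_edge_deleteEdges_of_not_adj hnadj₁, h, sup_edge_deleteEdges_of_not_adj hnadj₂]

lemma IsTree.eq_of_replaceEdge_eq {T₁ T₂ : SimpleGraph V} (hT₁ : T₁.IsTree) (hT₂ : T₂.IsTree)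
    (hab₁ : T₁.Adj a b) (hab₂ : T₂.Adj a b) (hc₁ : (T₁.deleteEdges {s(a, b)}).Reachable a c₁)
    (hc₂ : (T₂.deleteEdges {s(a, b)}).Reachable a c₂)
    (h : T₁.replaceEdge a b c₁ = T₂.replaceEdge a b c₂) : T₁ = T₂ ∧ c₁ = c₂ := by
  obtain ⟨hc, hH⟩ := eq_of_sup_edge_eq (hT₁.not_reachable_deleteEdges hab₁)
    (hT₂.not_reachable_deleteEdges hab₂) hc₁ hc₂ h
  refine ⟨?_, hc⟩
  rw [← deleteEdges_sup_edge_of_adj hab₁, hH, deleteEdges_sup_edge_of_adj hab₂]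

lemma replaceEdge_le (hTG : T ≤ G) (hcb : G.Adj c b) : T.replaceEdge a b c ≤ G :=
  sup_le ((deleteEdges_le _).trans hTG) (G.edge_le_iff.2 (.inr hcb))

lemma not_adj_replaceEdge (hca : c ≠ a) : ¬(T.replaceEdge a b c).Adj a b := by
  simp +contextual [replaceEdge, edge_adj, hca.symm]

open scoped Classical in
noncomputable def exchange (a b : V) (p : SimpleGraph V × V) : SimpleGraph V × Bool :=
  if (p.1.deleteEdges {s(a, b)}).Reachable a p.2 then (p.1.replaceEdge a b p.2, true)
  else (p.1.replaceEdge b a p.2, false)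

lemma mapsTo_exchange (G : SimpleGraph V) (a b : V) :
    Set.MapsTo (exchange a b)
      (({T | T ≤ G ∧ T.IsTree} ∩ {T | T.Adj a b}) ×ˢ {c | G.Adj a c ∧ G.Adj b c})
      (({T | T ≤ G ∧ T.IsTree} \ {T | T.Adj a b}) ×ˢ Set.univ) := by
  rintro ⟨T, c⟩ ⟨⟨⟨hTG, hT⟩, hab⟩, hac, hbc⟩
  unfold exchange
  split_ifs with hr
  · exact ⟨⟨⟨replaceEdge_le hTG hbc.symm, hT.replaceEdge hab hr⟩, not_adj_replaceEdge hac.ne'⟩,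
      trivial⟩
  · have hr' := (hT.connected.reachable_deleteEdges_or a b c).resolve_left hr
    exact ⟨⟨⟨replaceEdge_le hTG hac.symm, hT.replaceEdge hab.symm hr'⟩,
      fun h => not_adj_replaceEdge hbc.ne' h.symm⟩, trivial⟩

lemma injOn_exchange (a b : V) :
    Set.InjOn (exchange a b) (({T | T.IsTree} ∩ {T | T.Adj a b}) ×ˢ Set.univ) := by
  rintro ⟨T₁, c₁⟩ ⟨⟨hT₁, hab₁⟩, -⟩ ⟨T₂, c₂⟩ ⟨⟨hT₂, hab₂⟩, -⟩ h
  unfold exchange at h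
  split_ifs at h with hr₁ hr₂ hr₂
  · obtain ⟨hT, hc⟩ := hT₁.eq_of_replaceEdge_eq hT₂ hab₁ hab₂ hr₁ hr₂ (congrArg Prod.fst h)
    exact Prod.ext hT hc
  · simp at h
  · simp at h
  · obtain ⟨hT, hc⟩ := hT₁.eq_of_replaceEdge_eq hT₂ hab₁.symm hab₂.symm
      ((hT₁.connected.reachable_deleteEdges_or a b c₁).resolve_left hr₁)
      ((hT₂.connected.reachable_deleteEdges_or a b c₂).resolve_left hr₂) (congrArg Prod.fst h)
    exact Prod.ext hT hc

theorem ncard_isTree_adj_mul_le [Finite V] (G : SimpleGraph V) (a b : V) :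
    ({T | T ≤ G ∧ T.IsTree} ∩ {T | T.Adj a b}).ncard * {c | G.Adj a c ∧ G.Adj b c}.ncard ≤
      2 * ({T | T ≤ G ∧ T.IsTree} \ {T | T.Adj a b}).ncard := by
  have := Set.ncard_le_ncard_of_injOn _ (mapsTo_exchange G a b) ((injOn_exchange a b).mono
    (Set.prod_mono (Set.inter_subset_inter_left _ fun _ hT => hT.2) (Set.subset_univ _)))
  rwa [Set.ncard_prod, Set.ncard_prod, Set.ncard_univ, Nat.card_eq_fintype_card,
    Fintype.card_bool, mul_comm _ 2] at this

end SimpleGraph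

lemma cast_div_le_two_div_of_mul_le {x y d : ℕ} (h : x * d ≤ 2 * y) :
    (x : ℝ) / ((x + y : ℕ) : ℝ) ≤ 2 / ((d : ℝ) + 2) := by
  rcases Nat.eq_zero_or_pos (x + y) with h0 | hpos
  · rw [h0, Nat.cast_zero, div_zero]
    positivity
  · have h' : (x : ℝ) * d ≤ 2 * y := by exact_mod_cast h
    rw [div_le_div_iff₀ (by positivity) (by positivity)]
    push_cast
    linarith

lemma ncard_spanningTrees_sep {V : Type*} [Fintype V] (G : SimpleGraph V)
    (P : SimpleGraph V → Prop) :
    {s ∈ spanningTrees G | P (fromEdgeSet (s : Set (Sym2 V)))}.ncard =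
      ({T | T ≤ G ∧ T.IsTree} ∩ {T | P T}).ncard := by
  refine Set.ncard_congr (fun s _ => fromEdgeSet (s : Set (Sym2 V))) ?_ ?_ ?_
  · rintro s ⟨⟨hsG, hs⟩, hP⟩
    exact ⟨⟨(fromEdgeSet_le _).2 (Set.sdiff_subset.trans hsG), hs⟩, hP⟩
  · rintro s t ⟨⟨hsG, -⟩, -⟩ ⟨⟨htG, -⟩, -⟩ h
    have := congrArg edgeSet h
    rwa [edgeSet_fromEdgeSet_of_subset hsG, edgeSet_fromEdgeSet_of_subset htG,
      Finset.coe_inj] at this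
  · rintro T ⟨⟨hTG, hT⟩, hP⟩
    have hE : fromEdgeSet ((Set.toFinite T.edgeSet).toFinset : Set (Sym2 V)) = T := by
      simp
    refine ⟨(Set.toFinite T.edgeSet).toFinset, ⟨⟨?_, hE.symm ▸ hT⟩, hE.symm ▸ hP⟩, hE⟩
    simpa using edgeSet_subset_edgeSet.2 hTG

theorem ust_edge_prob_le_common_neighbors_general {V : Type*} [Fintype V] (G : SimpleGraph V)
    (a b : V) (d : ℕ)
    (hd : d ≤ {c : V | G.Adj a c ∧ G.Adj b c}.ncard) :
    ({s ∈ spanningTrees G | s(a, b) ∈ s}.ncard : ℝ) / ((spanningTrees G).ncard : ℝ) ≤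
      2 / ((d : ℝ) + 2) := by
  have hA : {s ∈ spanningTrees G | s(a, b) ∈ s} =
      {s ∈ spanningTrees G | (fromEdgeSet (s : Set (Sym2 V))).Adj a b} :=
    Set.ext fun s => and_congr_right fun hs =>
      ((fromEdgeSet_adj _).trans (and_iff_left_of_imp fun h => G.ne_of_adj (hs.1 h))).symm
  have hT : (spanningTrees G).ncard = {T | T ≤ G ∧ T.IsTree}.ncard := by
    simpa using ncard_spanningTrees_sep G fun _ => True
  rw [hA, ncard_spanningTrees_sep G fun T => T.Adj a b, hT,
    ← Set.ncard_inter_add_ncard_sdiff_eq_ncard {T | T ≤ G ∧ T.IsTree} {T | T.Adj a b}]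
  exact cast_div_le_two_div_of_mul_le
    ((Nat.mul_le_mul_left _ hd).trans (ncard_isTree_adj_mul_le G a b))

/-- Let `G` be a connected graph containing an edge `ab` such that `a` and
`b` have at least `d` common neighbours. If `T` is a uniformly random spanning tree of `G`,
then `P[ab ∈ T] ≤ 2/(d+2)`. -/
theorem ust_edge_prob_le_common_neighbors {V : Type*} [Fintype V] (G : SimpleGraph V)
    (hG : G.Connected) (a b : V) (hab : G.Adj a b) (d : ℕ)
    (hd : d ≤ {c : V | G.Adj a c ∧ G.Adj b c}.ncard) :
    ({s ∈ spanningTrees G | s(a, b) ∈ s}.ncard : ℝ) / ((spanningTrees G).ncard : ℝ) ≤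
      2 / ((d : ℝ) + 2) :=
  ust_edge_prob_le_common_neighbors_general G a b d hd
end
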